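/- No two distinct overlapping occurrences of the same word exist in the Thue–Morse sequence: for all i, d, n : ℕ with 0 < d and d < n, there exists j < n such that t (i + j) ≠ t (i + d + j). -/
import Mathlib


/-- The Thue–Morse sequence: `t n = true` iff the number of 1s in the
binary expansion of `n` is odd. -/
def thueMorse (n : ℕ) : Bool := (Nat.digits 2 n).count 1 % 2 == 1

lemma tm_two_mul (n : ℕ) : thueMorse (2 * n) = thueMorse n := by
  rcases Nat.eq_zero_or_pos n with h | h
  · simp [h]
  · unfold thueMorse
    rw [Nat.digits_def' (by norm_num : 1 < 2) (by omega)]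
    simp [Nat.mul_div_cancel_left, Nat.mul_mod_right]

lemma tm_two_mul_add_one (n : ℕ) : thueMorse (2 * n + 1) = !thueMorse n := by
  unfold thueMorse
  rw [Nat.digits_def' (by norm_num : 1 < 2) (by omega)]
  have h1 : (2 * n + 1) % 2 = 1 := by omega
  have h2 : (2 * n + 1) / 2 = n := by omega
  rw [h1, h2, List.count_cons]
  rcases Nat.mod_two_eq_zero_or_one ((Nat.digits 2 n).count 1) with h | h <;>
    simp [Nat.add_mod, h]

lemma tm_ne (n : ℕ) : thueMorse (2 * n) ≠ thueMorse (2 * n + 1) := by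
  rw [tm_two_mul, tm_two_mul_add_one]
  cases thueMorse n <;> simp

/-- No three consecutive equal letters in Thue–Morse. -/
lemma tm_no_aaa (m : ℕ) :
    ¬ (thueMorse m = thueMorse (m + 1) ∧ thueMorse (m + 1) = thueMorse (m + 2)) := by
  rintro ⟨h1, h2⟩
  rcases Nat.even_or_odd m with ⟨k, hk⟩ | ⟨k, hk⟩
  · have hm : m = 2 * k := by omega
    exact tm_ne k (by rw [← hm]; exact h1)
  · have hm : m + 1 = 2 * (k + 1) := by omega
    have hm2 : m + 2 = 2 * (k + 1) + 1 := by omega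
    apply tm_ne (k + 1)
    rw [hm, hm2] at h2
    exact h2

/-- Core lemma: no overlap with period `d`. -/
lemma tm_key : ∀ d, 0 < d → ∀ i, ∃ j ≤ d, thueMorse (i + j) ≠ thueMorse (i + d + j) := by
  intro d
  induction d using Nat.strong_induction_on with
  | _ d IH =>
    intro hd i
    by_contra hcon
    push_neg at hcon
    have H : ∀ k, i ≤ k → k ≤ i + d → thueMorse k = thueMorse (k + d) := by
      intro k h1 h2
      have := hcon (k - i) (by omega)
      rw [show i + (k - i) = k by omega, show i + d + (k - i) = k + d by omega] at this
      exact this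
    rcases Nat.even_or_odd d with ⟨e, he⟩ | ⟨e, he⟩
    · -- d even, d = 2e, reduce to period e
      have hde : d = 2 * e := by omega
      have hepos : 0 < e := by omega
      have helt : e < d := by omega
      rcases Nat.even_or_odd i with ⟨m, hm⟩ | ⟨m, hm⟩
      · have him : i = 2 * m := by omega
        obtain ⟨j, hj, hne⟩ := IH e helt hepos m
        apply hne
        have := H (i + 2 * j) (by omega) (by omega)
        rw [show i + 2 * j = 2 * (m + j) by omega,
          show 2 * (m + j) + d = 2 * (m + e + j) by omega,
          tm_two_mul, tm_two_mul] at this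
        exact this
      · have him : i = 2 * m + 1 := by omega
        obtain ⟨j, hj, hne⟩ := IH e helt hepos m
        apply hne
        have := H (i + 2 * j) (by omega) (by omega)
        rw [show i + 2 * j = 2 * (m + j) + 1 by omega,
          show 2 * (m + j) + 1 + d = 2 * (m + e + j) + 1 by omega,
          tm_two_mul_add_one, tm_two_mul_add_one] at this
        simpa using this
    · -- d odd, d = 2e + 1
      have hde : d = 2 * e + 1 := by omega
      rcases Nat.eq_zero_or_pos e with he0 | hepos
      · -- d = 1 : three consecutive equal letters
        apply tm_no_aaa i
        constructor
        · have := H i (le_refl i) (by omega); rwa [show i + d = i + 1 by omega] at this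
        · have := H (i + 1) (by omega) (by omega)
          rwa [show i + 1 + d = i + 2 by omega] at this
      · -- d ≥ 3
        -- key steps: from equalities at 2m and 2m+1 (resp. 2m+1 and 2m+2),
        -- get two equal consecutive letters at an explicit position
        have step_even : ∀ m, i ≤ 2 * m → 2 * m + 1 ≤ i + d →
            thueMorse (m + e) = thueMorse (m + e + 1) := by
          intro m h1 h2
          have e1 := H (2 * m) h1 (by omega)
          have e2 := H (2 * m + 1) (by omega) h2
          have hne := tm_ne m
          rw [e1, show 2 * m + d = 2 * (m + e) + 1 by omega, tm_two_mul_add_one, e2,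
            show 2 * m + 1 + d = 2 * (m + e + 1) by omega, tm_two_mul] at hne
          cases h : thueMorse (m + e) <;> cases h' : thueMorse (m + e + 1) <;>
            simp [h, h'] at hne ⊢
        have step_odd : ∀ m, i ≤ 2 * m + 1 → 2 * m + 2 ≤ i + d →
            thueMorse m = thueMorse (m + 1) := by
          intro m h1 h2
          have e1 := H (2 * m + 1) h1 (by omega)
          have e2 := H (2 * m + 2) (by omega) h2
          have hne := tm_ne (m + e + 1)
          rw [show 2 * (m + e + 1) + 1 = 2 * m + 2 + d by omega, ← e2,
            show 2 * (m + e + 1) = 2 * m + 1 + d by omega, ← e1,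
            show 2 * m + 1 + 1 = 2 * (m + 1) by omega,
            tm_two_mul_add_one, tm_two_mul] at hne
          cases h : thueMorse m <;> cases h' : thueMorse (m + 1) <;>
            simp [h, h'] at hne ⊢
        rcases Nat.even_or_odd i with ⟨m, hm⟩ | ⟨m, hm⟩
        · -- i = 2m : use k = i and k = i + 2
          have him : i = 2 * m := by omega
          have s1 := step_even m (by omega) (by omega)
          have s2 := step_even (m + 1) (by omega) (by omega)
          rw [show m + 1 + e = m + e + 1 by omega, show m + e + 1 + 1 = m + e + 2 by omega] at s2
          exact tm_no_aaa (m + e) ⟨s1, s2⟩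
        · -- i = 2m + 1
          have him : i = 2 * m + 1 := by omega
          have s1 := step_odd m (by omega) (by omega)
          have s2 := step_odd (m + 1) (by omega) (by omega)
          rw [show m + 1 + 1 = m + 2 by omega] at s2
          exact tm_no_aaa m ⟨s1, s2⟩

/-- No two distinct overlapping occurrences of the same word exist in the
Thue–Morse sequence: two intersecting blocks of the same length are not similar. -/
theorem thueMorse_no_overlapping_similar_blocks (i d n : ℕ) (hd : 0 < d) (hdn : d < n) :
    ∃ j < n, thueMorse (i + j) ≠ thueMorse (i + d + j) := by
  obtain ⟨j, hj, hne⟩ := tm_key d hd i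
  exact ⟨j, by omega, hne⟩
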